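/- If the spin-1 polarization-scaling map Φ is positive, i.e., Φ(X) is positive semidefinite for every positive semidefinite X ∈ M₃(ℂ), then |λᵢ| ≤ 1 for each i ∈ {1,2,3}. -/

import Mathlib

open Matrix Kronecker
open scoped ComplexOrder

/-- The spin-1 angular momentum matrix J₁. -/
noncomputable def spinOneJ1 : Matrix (Fin 3) (Fin 3) ℂ :=
  ((1 / Real.sqrt 2 : ℝ) : ℂ) • !![0, 1, 0; 1, 0, 1; 0, 1, 0]

/-- The spin-1 angular momentum matrix J₂. -/
noncomputable def spinOneJ2 : Matrix (Fin 3) (Fin 3) ℂ :=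
  ((1 / Real.sqrt 2 : ℝ) : ℂ) • !![0, -Complex.I, 0; Complex.I, 0, -Complex.I; 0, Complex.I, 0]

/-- The spin-1 angular momentum matrix J₃. -/
def spinOneJ3 : Matrix (Fin 3) (Fin 3) ℂ := !![1, 0, 0; 0, 0, 0; 0, 0, -1]

/-- The spin-1 polarization-scaling map
`Φ(X) = (1/3)·tr(X)·I₃ + (1/2)·Σᵢ λᵢ·tr(X Jᵢ)·Jᵢ`. -/
noncomputable def Phi3 (l1 l2 l3 : ℝ) (X : Matrix (Fin 3) (Fin 3) ℂ) :
    Matrix (Fin 3) (Fin 3) ℂ :=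
  (1 / 3 : ℂ) • X.trace • (1 : Matrix (Fin 3) (Fin 3) ℂ) +
    (1 / 2 : ℂ) • ((l1 : ℂ) • (X * spinOneJ1).trace • spinOneJ1 +
      (l2 : ℂ) • (X * spinOneJ2).trace • spinOneJ2 +
      (l3 : ℂ) • (X * spinOneJ3).trace • spinOneJ3)

/-!
Evaluate `Φ` on the pure state `X = v vᴴ` of the `+1` eigenvector `v` of `Jᵢ`. The expectations
`vᴴ Jⱼ v` vanish for `j ≠ i`, so `Φ(X)` is a combination `a • I + b • Jᵢ` with `b / a = 3 λᵢ / 2`.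
Evaluating its quadratic form on the `±1` eigenvectors of `Jᵢ` gives `a ± b ≥ 0`, i.e. even
`|λᵢ| ≤ 2 / 3`.
-/

open Real

section

variable {n 𝕜 : Type*} [Fintype n] [RCLike 𝕜]

theorem Matrix.trace_vecMulVec_mul {R : Type*} [CommSemiring R] (a b : n → R)
    (A : Matrix n n R) : (vecMulVec a b * A).trace = b ⬝ᵥ (A *ᵥ a) := by
  rw [vecMulVec_mul, trace_vecMulVec, dotProduct_comm, dotProduct_mulVec]

theorem Matrix.PosSemidef.nonneg_of_mulVec_eq_smul {M : Matrix n n 𝕜} (hM : M.PosSemidef)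
    {v : n → 𝕜} {c : 𝕜} (hv : M *ᵥ v = c • v) (hv0 : v ≠ 0) : 0 ≤ c := by
  have h := hM.dotProduct_mulVec_nonneg v
  rw [hv, dotProduct_smul, smul_eq_mul, ← zero_mul (star v ⬝ᵥ v)] at h
  exact le_of_mul_le_mul_right h (dotProduct_star_self_pos_iff.mpr hv0)

theorem abs_le_of_posSemidef_smul_one_add_smul [DecidableEq n] {J : Matrix n n 𝕜}
    {p m : n → 𝕜} (hp : J *ᵥ p = p) (hm : J *ᵥ m = -m) (hp0 : p ≠ 0) (hm0 : m ≠ 0)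
    {a b : ℝ} (h : ((a : 𝕜) • 1 + (b : 𝕜) • J).PosSemidef) : |b| ≤ a := by
  have hplus := h.nonneg_of_mulVec_eq_smul (c := ((a + b : ℝ) : 𝕜)) (by
    rw [add_mulVec, smul_mulVec, smul_mulVec, one_mulVec, hp]; push_cast; module) hp0
  have hminus := h.nonneg_of_mulVec_eq_smul (c := ((a - b : ℝ) : 𝕜)) (by
    rw [add_mulVec, smul_mulVec, smul_mulVec, one_mulVec, hm]; push_cast; module) hm0
  rw [RCLike.ofReal_nonneg] at hplus hminus
  exact abs_le.2 ⟨by linarith, by linarith⟩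

end

@[simp]
lemma Complex.ofReal_sqrt_two_sq : ((√2 : ℝ) : ℂ) ^ 2 = 2 := by
  norm_cast; simp

@[simp]
lemma Complex.ofReal_sqrt_two_mul_self : ((√2 : ℝ) : ℂ) * (√2 : ℝ) = 2 := by
  norm_cast; simp

lemma spinOneJ1_mulVec_plus :
    spinOneJ1 *ᵥ ![1, ((√2 : ℝ) : ℂ), 1] = ![1, ((√2 : ℝ) : ℂ), 1] := by
  ext i
  fin_cases i <;> simp [spinOneJ1, mulVec, dotProduct, Fin.sum_univ_three]
  field_simp
  norm_num

lemma spinOneJ1_mulVec_minus :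
    spinOneJ1 *ᵥ ![1, -((√2 : ℝ) : ℂ), 1] = -![1, -((√2 : ℝ) : ℂ), 1] := by
  ext i
  fin_cases i <;> simp [spinOneJ1, mulVec, dotProduct, Fin.sum_univ_three]
  field_simp
  norm_num

lemma spinOneJ2_mulVec_plus :
    spinOneJ2 *ᵥ ![1, Complex.I * (√2 : ℝ), -1] = ![1, Complex.I * (√2 : ℝ), -1] := by
  ext i
  fin_cases i <;> simp [spinOneJ2, mulVec, dotProduct, Fin.sum_univ_three] <;> field_simp <;>
    norm_num

lemma spinOneJ2_mulVec_minus :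
    spinOneJ2 *ᵥ ![1, -Complex.I * (√2 : ℝ), -1] = -![1, -Complex.I * (√2 : ℝ), -1] := by
  ext i
  fin_cases i <;> simp [spinOneJ2, mulVec, dotProduct, Fin.sum_univ_three] <;> field_simp <;>
    norm_num

lemma spinOneJ3_mulVec_plus : spinOneJ3 *ᵥ ![1, 0, 0] = ![1, 0, 0] := by
  ext i; fin_cases i <;> simp [spinOneJ3, mulVec, dotProduct, Fin.sum_univ_three]

lemma spinOneJ3_mulVec_minus : spinOneJ3 *ᵥ ![0, 0, 1] = -![0, 0, 1] := by
  ext i; fin_cases i <;> simp [spinOneJ3, mulVec, dotProduct, Fin.sum_univ_three]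

lemma Phi3_vecMulVec_J1_eigvec (l1 l2 l3 : ℝ) :
    Phi3 l1 l2 l3 (vecMulVec ![1, ((√2 : ℝ) : ℂ), 1] (star ![1, ((√2 : ℝ) : ℂ), 1])) =
      ((4 / 3 : ℝ) : ℂ) • 1 + ((2 * l1 : ℝ) : ℂ) • spinOneJ1 := by
  simp only [Phi3, trace_vecMulVec_mul, trace_vecMulVec, spinOneJ1_mulVec_plus]
  simp [dotProduct, mulVec, Fin.sum_univ_three, spinOneJ2, spinOneJ3]
  module

lemma Phi3_vecMulVec_J2_eigvec (l1 l2 l3 : ℝ) :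
    Phi3 l1 l2 l3
        (vecMulVec ![1, Complex.I * (√2 : ℝ), -1] (star ![1, Complex.I * (√2 : ℝ), -1])) =
      ((4 / 3 : ℝ) : ℂ) • 1 + ((2 * l2 : ℝ) : ℂ) • spinOneJ2 := by
  simp only [Phi3, trace_vecMulVec_mul, trace_vecMulVec, spinOneJ2_mulVec_plus]
  simp [dotProduct, mulVec, Fin.sum_univ_three, spinOneJ1, spinOneJ3, mul_mul_mul_comm]
  module

lemma Phi3_vecMulVec_J3_eigvec (l1 l2 l3 : ℝ) :
    Phi3 l1 l2 l3 (vecMulVec ![1, 0, 0] (star ![1, 0, 0])) =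
      ((1 / 3 : ℝ) : ℂ) • 1 + ((l3 / 2 : ℝ) : ℂ) • spinOneJ3 := by
  simp only [Phi3, trace_vecMulVec_mul, trace_vecMulVec, spinOneJ3_mulVec_plus]
  simp [dotProduct, mulVec, Fin.sum_univ_three, spinOneJ1, spinOneJ2]
  module

theorem spin_one_map_positive_implies_abs_le_one (l1 l2 l3 : ℝ)
    (hpos : ∀ X : Matrix (Fin 3) (Fin 3) ℂ, X.PosSemidef → (Phi3 l1 l2 l3 X).PosSemidef) :
    |l1| ≤ 1 ∧ |l2| ≤ 1 ∧ |l3| ≤ 1 := by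
  have hpos_pure (v : Fin 3 → ℂ) := hpos _ (posSemidef_vecMulVec_self_star v)
  have h1 : |2 * l1| ≤ 4 / 3 :=
    abs_le_of_posSemidef_smul_one_add_smul spinOneJ1_mulVec_plus spinOneJ1_mulVec_minus
      (by simp) (by simp) (Phi3_vecMulVec_J1_eigvec l1 l2 l3 ▸ hpos_pure _)
  have h2 : |2 * l2| ≤ 4 / 3 :=
    abs_le_of_posSemidef_smul_one_add_smul spinOneJ2_mulVec_plus spinOneJ2_mulVec_minus
      (by simp) (by simp) (Phi3_vecMulVec_J2_eigvec l1 l2 l3 ▸ hpos_pure _)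
  have h3 : |l3 / 2| ≤ 1 / 3 :=
    abs_le_of_posSemidef_smul_one_add_smul spinOneJ3_mulVec_plus spinOneJ3_mulVec_minus
      (by simp) (by simp) (Phi3_vecMulVec_J3_eigvec l1 l2 l3 ▸ hpos_pure _)
  rw [abs_mul, abs_two] at h1 h2
  rw [abs_div, abs_two] at h3
  exact ⟨by linarith, by linarith, by linarith⟩
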